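/- Let B and C be finite types with |B| ≥ 2 and |C| ≥ 2. Then there is an injective group homomorphism from the free group on two generators into PAut[B;C] (so in particular PAut[B;C] contains a nonabelian free subgroup and is not amenable). -/

import Mathlib

open Function

/-- The shift map on `ℤ → A`. -/
def shiftMap (A : Type*) : (ℤ → A) → (ℤ → A) := fun x i => x (i + 1)

/-- The shift map as a permutation of `ℤ → A`. -/
def shiftPerm (A : Type*) : Equiv.Perm (ℤ → A) where
  toFun := shiftMap A
  invFun x i := x (i - 1)
  left_inv x := funext fun i => by simp [shiftMap]
  right_inv x := funext fun i => by simp [shiftMap]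

/-- Finite types carry the discrete topology. -/
instance fintypeDiscreteTopology (A : Type*) [Fintype A] : TopologicalSpace A := ⊥

/-- The automorphism group of the full shift `A^ℤ`: shift-commuting self-homeomorphisms of
`ℤ → A`, as a subgroup of the permutation group of `ℤ → A`. -/
def FullShiftAut (A : Type*) [Fintype A] : Subgroup (Equiv.Perm (ℤ → A)) where
  carrier := { f | Continuous ⇑f ∧ Continuous ⇑f.symm ∧
      ∀ x, f (shiftMap A x) = shiftMap A (f x) }
  one_mem' := ⟨continuous_id, continuous_id, fun _ => rfl⟩
  mul_mem' := by
    rintro f g ⟨hf1, hf2, hf3⟩ ⟨hg1, hg2, hg3⟩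
    refine ⟨?_, ?_, fun x => ?_⟩
    · exact hf1.comp hg1
    · exact hg2.comp hf2
    · show f (g (shiftMap A x)) = shiftMap A (f (g x))
      rw [hg3, hf3]
  inv_mem' := by
    rintro f ⟨hf1, hf2, hf3⟩
    refine ⟨hf2, hf1, fun x => ?_⟩
    apply f.injective
    rw [hf3]
    exact (f.apply_symm_apply _).trans (congrArg (shiftMap A) (f.apply_symm_apply x)).symm

/-- The symbol permutation determined by a permutation of the alphabet. -/
def symbolPerm {A : Type*} (π : Equiv.Perm A) : Equiv.Perm (ℤ → A) :=
  Equiv.piCongrRight fun _ => π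

/-- The partial shift on the first track. -/
def partialShift₁ (B C : Type*) : Equiv.Perm (ℤ → B × C) where
  toFun x i := ((x (i + 1)).1, (x i).2)
  invFun x i := ((x (i - 1)).1, (x i).2)
  left_inv x := funext fun i => by simp
  right_inv x := funext fun i => by simp

/-- The partial shift on the second track. -/
def partialShift₂ (B C : Type*) : Equiv.Perm (ℤ → B × C) where
  toFun x i := ((x i).1, (x (i + 1)).2)
  invFun x i := ((x i).1, (x (i - 1)).2)
  left_inv x := funext fun i => by simp
  right_inv x := funext fun i => by simp

/-- `PAut[B;C]`: the subgroup of the automorphism group of `(B × C)^ℤ` generated by the two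
partial shifts and all symbol permutations. -/
def PAut (B C : Type*) : Subgroup (Equiv.Perm (ℤ → B × C)) :=
  Subgroup.closure
    ({partialShift₁ B C, partialShift₂ B C} ∪ Set.range (symbolPerm (A := B × C)))

theorem Equiv.Perm.apply_inv_self {α : Type*} (f : Equiv.Perm α) (x : α) : f (f⁻¹ x) = x :=
  f.apply_symm_apply x

theorem Equiv.Perm.inv_apply_self {α : Type*} (f : Equiv.Perm α) (x : α) : f⁻¹ (f x) = x :=
  f.symm_apply_apply x


namespace Stmt14Aux

abbrev R2 : Type := ℤ →₀ ZMod 2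
abbrev V2 : Type := R2 × R2

lemma r2_add_apply (u v : R2) (i : ℤ) : (u + v) i = u i + v i := Finsupp.add_apply u v i

lemma r2_ext {u v : R2} (h : ∀ i, u i = v i) : u = v := Finsupp.ext h

lemma add_self (u : R2) : u + u = 0 := by
  apply r2_ext; intro i
  rw [r2_add_apply]
  have : ∀ x : ZMod 2, x + x = 0 := by decide
  simpa using this (u i)

/-- shift: `(sh j u) i = u (i - j)`. -/
def sh (j : ℤ) (u : R2) : R2 := Finsupp.equivMapDomain (Equiv.addRight j) u

lemma sh_apply (j : ℤ) (u : R2) (i : ℤ) : sh j u i = u (i - j) := by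
  simp [sh, Finsupp.equivMapDomain_apply, sub_eq_add_neg]

lemma sh_sh (j k : ℤ) (u : R2) : sh j (sh k u) = sh (j + k) u := by
  apply r2_ext; intro i
  rw [sh_apply, sh_apply, sh_apply]
  congr 1; ring

lemma sh_zero (u : R2) : sh 0 u = u := by
  apply r2_ext; intro i; rw [sh_apply]; congr 1; ring

lemma sh_support (j : ℤ) (u : R2) :
    (sh j u).support = u.support.map (Equiv.addRight j).toEmbedding := rfl

/-- Degree. -/
def D (u : R2) : WithBot ℤ := u.support.max

lemma D_eq_bot {u : R2} : D u = ⊥ ↔ u = 0 := by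
  rw [D, Finset.max_eq_bot, Finsupp.support_eq_empty]

lemma D_ultra (u v : R2) : D (u + v) ≤ max (D u) (D v) := by
  rw [D, D, D, ← Finset.max_union]
  exact Finset.max_mono Finsupp.support_add

lemma D_sh (j : ℤ) (u : R2) : D (sh j u) = D u + (j : WithBot ℤ) := by
  rw [D, D, sh_support]
  induction u.support using Finset.induction_on with
  | empty => simp
  | insert a s h ih =>
    rw [Finset.map_insert, Finset.max_insert, Finset.max_insert, ih]
    rcases Finset.max _ with _ | n
    · simp [WithBot.none_eq_bot]
    · simp only [WithBot.some_eq_coe, Equiv.toEmbedding_apply, Equiv.coe_addRight,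
        ← WithBot.coe_add, ← WithBot.coe_sup]
      rw [WithBot.coe_inj, max_add_add_right]


lemma wb_le_add (x : WithBot ℤ) {k : ℤ} (hk : 0 ≤ k) : x ≤ x + (k : WithBot ℤ) := by
  rcases x with _ | n
  · exact bot_le
  · rw [WithBot.some_eq_coe, ← WithBot.coe_add, WithBot.coe_le_coe]
    omega

lemma wb_lt_add {x : WithBot ℤ} (hx : x ≠ ⊥) {k : ℤ} (hk : 0 < k) :
    x < x + (k : WithBot ℤ) := by
  rcases x with _ | n
  · exact absurd rfl hx
  · rw [WithBot.some_eq_coe, ← WithBot.coe_add, WithBot.coe_lt_coe]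
    omega

lemma wb_contra {x : WithBot ℤ} (hx : x ≠ ⊥) {k : ℤ} (hk : 0 < k)
    (h : x + (k : WithBot ℤ) ≤ x) : False :=
  absurd h (not_le.mpr (wb_lt_add hx hk))

lemma wb_le_of_add_le {x y : WithBot ℤ} {k : ℤ} (hk : 0 ≤ k)
    (h : x + (k : WithBot ℤ) ≤ y) : x ≤ y := le_trans (wb_le_add x hk) h

lemma wb_add_eq_bot {x : WithBot ℤ} {k : ℤ} (h : x + (k : WithBot ℤ) ≤ ⊥) : x = ⊥ := by
  rcases x with _ | n
  · rfl
  · rw [WithBot.some_eq_coe, ← WithBot.coe_add] at h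
    exact absurd h (by simp)

/-- Ultrametric dominance: if `D u < D v` then `D (u + v) = D v`. -/
lemma D_dom {u v : R2} (h : D u < D v) : D (u + v) = D v := by
  refine le_antisymm ((D_ultra u v).trans (by rw [max_eq_right h.le])) ?_
  have hv : v = u + (u + v) := by
    rw [← add_assoc, add_self, zero_add]
  have h2 : D v ≤ max (D u) (D (u + v)) := by
    conv_lhs => rw [hv]
    exact D_ultra _ _
  rcases max_cases (D u) (D (u + v)) with ⟨he, _⟩ | ⟨he, _⟩
  · rw [he] at h2; exact absurd (lt_of_le_of_lt h2 h) (lt_irrefl _)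
  · rwa [he] at h2

lemma D_ne_bot {u : R2} (h : u ≠ 0) : D u ≠ ⊥ := fun hb => h (D_eq_bot.mp hb)


/-! ### Model permutations -/

lemma char2_helper1 (u v : R2) : u + v + v = u := by
  rw [add_assoc, add_self, add_zero]

noncomputable def mE12 : Equiv.Perm V2 :=
  Involutive.toPerm (fun w => (w.1 + w.2, w.2))
    (fun w => Prod.ext (char2_helper1 _ _) rfl)

noncomputable def mE21 : Equiv.Perm V2 :=
  Involutive.toPerm (fun w => (w.1, w.2 + sh 2 w.1))
    (fun w => Prod.ext rfl (char2_helper1 _ _))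

noncomputable def mM : Equiv.Perm V2 :=
  Involutive.toPerm (fun w => (w.1 + sh 4 w.2, w.2))
    (fun w => Prod.ext (char2_helper1 _ _) rfl)

lemma mE12_apply (w : V2) : mE12 w = (w.1 + w.2, w.2) := rfl
lemma mE21_apply (w : V2) : mE21 w = (w.1, w.2 + sh 2 w.1) := rfl
lemma mM_apply (w : V2) : mM w = (w.1 + sh 4 w.2, w.2) := rfl

lemma mE12_inv : mE12⁻¹ = mE12 := Equiv.ext fun _ => rfl
lemma mE21_inv : mE21⁻¹ = mE21 := Equiv.ext fun _ => rfl
lemma mM_inv : mM⁻¹ = mM := Equiv.ext fun _ => rfl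

lemma mM_invol (w : V2) : mM (mM w) = w := Prod.ext (char2_helper1 _ _) rfl

noncomputable def aV : Equiv.Perm V2 := mE12 * mE21

noncomputable def bV : Equiv.Perm V2 := mM * aV * mM

lemma aV_apply (w : V2) : aV w = (w.1 + (w.2 + sh 2 w.1), w.2 + sh 2 w.1) := rfl

lemma aV_inv_apply (w : V2) : aV⁻¹ w = (w.1 + w.2, w.2 + sh 2 (w.1 + w.2)) := by
  rw [aV, mul_inv_rev, mE12_inv, mE21_inv, Equiv.Perm.mul_apply, mE12_apply, mE21_apply]

lemma bV_inv : bV⁻¹ = mM * aV⁻¹ * mM := by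
  rw [bV, mul_inv_rev, mul_inv_rev, mM_inv, mul_assoc]

/-! ### Ping-pong sets (vector level) -/

def XAv (w : V2) : Prop :=
  w.1 + w.2 ≠ 0 ∧ D (w.1 + w.2) + ((2:ℤ) : WithBot ℤ) ≤ D w.2

def YAv (w : V2) : Prop := D w.1 + ((2:ℤ) : WithBot ℤ) ≤ D w.2

lemma keyX {w : V2} (h : ¬ YAv w) : XAv (aV w) := by
  obtain ⟨u, v⟩ := w
  have h' : ¬ (D u + ((2:ℤ) : WithBot ℤ) ≤ D v) := h
  have hu : u ≠ 0 := by
    rintro rfl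
    exact h' (by rw [D_eq_bot.mpr rfl, WithBot.bot_add]; exact bot_le)
  have hlt : D v < D u + ((2:ℤ) : WithBot ℤ) := not_le.mp h'
  have hsh : D (sh 2 u) = D u + ((2:ℤ) : WithBot ℤ) := D_sh 2 u
  have hdom : D (v + sh 2 u) = D u + ((2:ℤ) : WithBot ℤ) := by
    rw [← hsh]; exact D_dom (by rwa [hsh])
  constructor
  · show u + (v + sh 2 u) + (v + sh 2 u) ≠ 0
    rw [char2_helper1]; exact hu
  · show D (u + (v + sh 2 u) + (v + sh 2 u)) + ((2:ℤ) : WithBot ℤ) ≤ D (v + sh 2 u)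
    rw [char2_helper1, hdom]

lemma keyY {w : V2} (h : ¬ XAv w) : YAv (aV⁻¹ w) := by
  obtain ⟨u, v⟩ := w
  rw [XAv, not_and_or, not_not] at h
  have : aV⁻¹ (u, v) = (u + v, v + sh 2 (u + v)) := aV_inv_apply (u, v)
  rw [this]
  show D (u + v) + ((2:ℤ) : WithBot ℤ) ≤ D (v + sh 2 (u + v))
  rcases h with h | h
  · have h0 : u + v = 0 := h
    rw [h0, D_eq_bot.mpr rfl, WithBot.bot_add]
    exact bot_le
  · have hlt : D v < D (u + v) + ((2:ℤ) : WithBot ℤ) := not_le.mp h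
    have hsh : D (sh 2 (u + v)) = D (u + v) + ((2:ℤ) : WithBot ℤ) := D_sh 2 (u + v)
    have hdom : D (v + sh 2 (u + v)) = D (u + v) + ((2:ℤ) : WithBot ℤ) := by
      rw [← hsh]; exact D_dom (by rwa [hsh])
    rw [hdom]


/-! ### char-2 identities -/

lemma c2_1 (a b c : R2) : (a + b) + ((a + c) + b) = c := by
  have h : ∀ x y z : ZMod 2, (x + y) + ((x + z) + y) = z := by decide
  apply r2_ext; intro i; simp only [r2_add_apply]; exact h _ _ _

lemma c2_2 (a c : R2) : a + (a + c) = c := by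
  have h : ∀ x z : ZMod 2, x + (x + z) = z := by decide
  apply r2_ext; intro i; simp only [r2_add_apply]; exact h _ _

lemma c2_3 (a b c : R2) : (a + b) + (a + c) = b + c := by
  have h : ∀ x y z : ZMod 2, (x + y) + (x + z) = y + z := by decide
  apply r2_ext; intro i; simp only [r2_add_apply]; exact h _ _ _

lemma c2_4 (a b : R2) : b = (a + b) + a := by
  have h : ∀ x y : ZMod 2, y = (x + y) + x := by decide
  apply r2_ext; intro i; simp only [r2_add_apply]; exact h _ _

lemma c2_5 (a b : R2) : (a + b) + a = b := (c2_4 a b).symm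

/-! ### Disjointness -/

lemma disj_core {x y v : R2} (hv : v ≠ 0)
    (h1 : D x + ((2:ℤ) : WithBot ℤ) ≤ D v) (h2 : D y + ((2:ℤ) : WithBot ℤ) ≤ D v)
    (hD : D (x + y) = D v + ((4:ℤ) : WithBot ℤ)) : False := by
  have hle : D (x + y) ≤ D v :=
    (D_ultra x y).trans (max_le (wb_le_of_add_le (by norm_num) h1)
      (wb_le_of_add_le (by norm_num) h2))
  rw [hD] at hle
  exact wb_contra (D_ne_bot hv) (by norm_num) hle

lemma XAv_v_ne {w : V2} (h : XAv w) : w.2 ≠ 0 := by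
  obtain ⟨u, v⟩ := w
  obtain ⟨hne, hle⟩ := h
  rintro rfl
  rw [show D ((u, (0:R2)).2) = ⊥ from D_eq_bot.mpr rfl] at hle
  exact hne (D_eq_bot.mp (wb_add_eq_bot hle))

lemma dXY {w : V2} (h1 : XAv w) (h2 : YAv w) : False := by
  obtain ⟨u, v⟩ := w
  obtain ⟨hne, hle⟩ := h1
  have h2' : D u + ((2:ℤ) : WithBot ℤ) ≤ D v := h2
  have hvle : D v ≤ max (D (u + v)) (D u) := by
    conv_lhs => rw [c2_4 u v]
    exact D_ultra _ _
  rcases max_cases (D (u + v)) (D u) with ⟨he, _⟩ | ⟨he, _⟩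
  · rw [he] at hvle
    exact wb_contra (D_ne_bot hne) (by norm_num) (hle.trans hvle)
  · rw [he] at hvle
    by_cases hu : u = 0
    · rw [hu, D_eq_bot.mpr rfl] at hvle
      have hvb : D v = ⊥ := le_bot_iff.mp hvle
      rw [hvb] at hle
      exact hne (D_eq_bot.mp (wb_add_eq_bot hle))
    · exact wb_contra (D_ne_bot hu) (by norm_num) (h2'.trans hvle)

lemma dXX {w : V2} (h1 : XAv w) (h2 : XAv (mM w)) : False := by
  obtain ⟨u, v⟩ := w
  obtain ⟨hne1, hle1⟩ := h1
  rw [mM_apply] at h2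
  obtain ⟨hne2, hle2⟩ := h2
  have hv : v ≠ 0 := XAv_v_ne ⟨hne1, hle1⟩
  refine disj_core hv hle1 hle2 ?_
  have hsum : ((u, v).1 + (u, v).2) + (((u, v).1 + sh 4 (u, v).2, (u, v).2).1
      + ((u, v).1 + sh 4 (u, v).2, (u, v).2).2) = sh 4 v := by
    show (u + v) + ((u + sh 4 v) + v) = sh 4 v
    exact c2_1 u v (sh 4 v)
  rw [hsum, D_sh]

lemma dYY {w : V2} (hw : w ≠ 0) (h1 : YAv w) (h2 : YAv (mM w)) : False := by
  obtain ⟨u, v⟩ := w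
  have h1' : D u + ((2:ℤ) : WithBot ℤ) ≤ D v := h1
  rw [mM_apply] at h2
  have h2' : D (u + sh 4 v) + ((2:ℤ) : WithBot ℤ) ≤ D v := h2
  have hv : v ≠ 0 := by
    rintro rfl
    rw [show D ((0:R2)) = ⊥ from D_eq_bot.mpr rfl] at h1'
    exact hw (by rw [D_eq_bot.mp (wb_add_eq_bot h1')]; rfl)
  refine disj_core hv h1' h2' ?_
  rw [c2_2 u (sh 4 v), D_sh]

lemma dXmY {w : V2} (h1 : XAv w) (h2 : YAv (mM w)) : False := by
  obtain ⟨u, v⟩ := w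
  obtain ⟨hne1, hle1⟩ := h1
  rw [mM_apply] at h2
  have h2' : D (u + sh 4 v) + ((2:ℤ) : WithBot ℤ) ≤ D v := h2
  have hv : v ≠ 0 := XAv_v_ne ⟨hne1, hle1⟩
  refine disj_core hv hle1 h2' ?_
  rw [c2_3 u v (sh 4 v)]
  have hlt : D v < D (sh 4 v) := by
    rw [D_sh]
    exact wb_lt_add (D_ne_bot hv) (by norm_num)
  rw [D_dom hlt, D_sh]

lemma dmXY {w : V2} (h1 : XAv (mM w)) (h2 : YAv w) : False :=
  dXmY h1 (by rwa [mM_invol])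


/-! ### Restriction to nonzero vectors and the ping-pong theorem -/

def Vnz : Type := {w : V2 // w ≠ 0}

lemma sh_zero_right (j : ℤ) : sh j (0 : R2) = 0 := by
  apply r2_ext; intro i; rw [sh_apply]; rfl

lemma mE12_zero : mE12 (0 : V2) = 0 := by
  rw [show (0 : V2) = ((0 : R2), (0 : R2)) from rfl, mE12_apply]
  simp

lemma mE21_zero : mE21 (0 : V2) = 0 := by
  rw [show (0 : V2) = ((0 : R2), (0 : R2)) from rfl, mE21_apply]
  simp [sh_zero_right]

lemma mM_zero : mM (0 : V2) = 0 := by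
  rw [show (0 : V2) = ((0 : R2), (0 : R2)) from rfl, mM_apply]
  simp [sh_zero_right]

lemma aV_zero : aV (0 : V2) = 0 := by
  rw [aV, Equiv.Perm.mul_apply, mE21_zero, mE12_zero]

lemma bV_zero : bV (0 : V2) = 0 := by
  rw [bV, Equiv.Perm.mul_apply, Equiv.Perm.mul_apply, mM_zero, aV_zero, mM_zero]

noncomputable def restr (e : Equiv.Perm V2) (he : e 0 = 0) : Equiv.Perm Vnz :=
  e.subtypePerm (fun x => not_congr
    ⟨fun hx => e.injective (by rw [hx, he]), fun hx => by rw [hx, he]⟩)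

lemma restr_apply (e : Equiv.Perm V2) (he : e 0 = 0) (p : Vnz) :
    (restr e he p).1 = e p.1 := rfl

lemma restr_inv_apply (e : Equiv.Perm V2) (he : e 0 = 0) (p : Vnz) :
    ((restr e he)⁻¹ p).1 = e⁻¹ p.1 := rfl

noncomputable def aP : Equiv.Perm Vnz := restr aV aV_zero

noncomputable def bP : Equiv.Perm Vnz := restr bV bV_zero

lemma bV_apply' (w : V2) : bV w = mM (aV (mM w)) := rfl

lemma bV_inv_apply' (w : V2) : bV⁻¹ w = mM (aV⁻¹ (mM w)) := by
  rw [bV_inv, Equiv.Perm.mul_apply, Equiv.Perm.mul_apply]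

/-- The ping-pong sets. -/
def Xpp : Fin 2 → Set Vnz := ![{p | XAv p.1}, {p | XAv (mM p.1)}]

def Ypp : Fin 2 → Set Vnz := ![{p | YAv p.1}, {p | YAv (mM p.1)}]

lemma D_single (k : ℤ) : D (Finsupp.single k (1 : ZMod 2)) = (k : WithBot ℤ) := by
  rw [D, Finsupp.support_single_ne_zero _ one_ne_zero, Finset.max_singleton]

/-- Base point in `XA`. -/
noncomputable def w0 : V2 :=
  (Finsupp.single 0 1 + Finsupp.single (-2) 1, Finsupp.single 0 1)

lemma w0_ne : w0 ≠ 0 := by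
  intro h
  have h2 : (Finsupp.single 0 1 : R2) = 0 := congrArg Prod.snd h
  exact one_ne_zero (Finsupp.single_eq_zero.mp h2)

lemma XAv_w0 : XAv w0 := by
  have hsum : w0.1 + w0.2 = Finsupp.single (-2) 1 := by
    show (Finsupp.single 0 1 + Finsupp.single (-2) 1) + Finsupp.single 0 1
        = Finsupp.single (-2) 1
    rw [add_comm (Finsupp.single 0 1 : R2) (Finsupp.single (-2) 1 : R2), char2_helper1]
  constructor
  · rw [hsum]
    exact fun h => one_ne_zero (Finsupp.single_eq_zero.mp h)
  · rw [hsum]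
    show D (Finsupp.single (-2) 1) + _ ≤ D w0.2
    rw [D_single, show (w0.2 : R2) = Finsupp.single 0 1 from rfl, D_single,
      ← WithBot.coe_add]
    norm_num

lemma mM_ne_zero {w : V2} (hw : w ≠ 0) : mM w ≠ 0 := by
  intro h
  exact hw (by rw [← mM_invol w, h, mM_zero])

theorem model_injective :
    Function.Injective (FreeGroup.lift (![aP, bP] : Fin 2 → Equiv.Perm Vnz)) := by
  apply FreeGroup.injective_lift_of_ping_pong ![aP, bP] Xpp Ypp
  · -- nonempty
    intro i
    fin_cases i
    · exact ⟨⟨w0, w0_ne⟩, XAv_w0⟩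
    · refine ⟨⟨mM w0, mM_ne_zero w0_ne⟩, ?_⟩
      show XAv (mM (mM w0))
      rw [mM_invol]
      exact XAv_w0
  · -- X pairwise disjoint
    intro i j hij
    fin_cases i <;> fin_cases j
    · exact absurd rfl hij
    · refine Set.disjoint_left.mpr fun p hp hq => ?_
      simp only [Xpp, Matrix.cons_val_zero, Matrix.cons_val_one, Matrix.head_cons,
        Set.mem_setOf_eq] at hp hq
      exact dXX hp hq
    · refine Set.disjoint_left.mpr fun p hp hq => ?_
      simp only [Xpp, Matrix.cons_val_zero, Matrix.cons_val_one, Matrix.head_cons,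
        Set.mem_setOf_eq] at hp hq
      exact dXX hq hp
    · exact absurd rfl hij
  · -- Y pairwise disjoint
    intro i j hij
    fin_cases i <;> fin_cases j
    · exact absurd rfl hij
    · refine Set.disjoint_left.mpr fun p hp hq => ?_
      simp only [Ypp, Matrix.cons_val_zero, Matrix.cons_val_one, Matrix.head_cons,
        Set.mem_setOf_eq] at hp hq
      exact dYY p.2 hp hq
    · refine Set.disjoint_left.mpr fun p hp hq => ?_
      simp only [Ypp, Matrix.cons_val_zero, Matrix.cons_val_one, Matrix.head_cons,
        Set.mem_setOf_eq] at hp hq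
      exact dYY p.2 hq hp
    · exact absurd rfl hij
  · -- X vs Y disjoint
    intro i j
    fin_cases i <;> fin_cases j <;>
        refine Set.disjoint_left.mpr fun p hp hq => ?_ <;>
      simp only [Xpp, Ypp, Matrix.cons_val_zero, Matrix.cons_val_one, Matrix.head_cons,
        Set.mem_setOf_eq] at hp hq
    · exact dXY hp hq
    · exact dXmY hp hq
    · exact dmXY hp hq
    · exact dXY hp hq
  · -- forward images
    intro i
    fin_cases i <;> rintro q ⟨p, hp, rfl⟩
    · have hp' : ¬ YAv p.1 := by
        exact hp
      show ((![aP, bP] 0 : Equiv.Perm Vnz) • p) ∈ Xpp 0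
      simp only [Xpp, Matrix.cons_val_zero, Set.mem_setOf_eq]
      exact keyX hp'
    · have hp' : ¬ YAv (mM p.1) := by
        exact hp
      show ((![aP, bP] 1 : Equiv.Perm Vnz) • p) ∈ Xpp 1
      simp only [Xpp, Matrix.cons_val_one, Matrix.head_cons, Set.mem_setOf_eq]
      have h2 : mM ((bP • p : Vnz)).1 = aV (mM p.1) := by
        rw [show ((bP • p : Vnz)).1 = bV p.1 from rfl, bV_apply', mM_invol]
      show XAv (mM ((bP • p : Vnz)).1)
      rw [h2]
      exact keyX hp'
  · -- backward images
    intro i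
    fin_cases i <;> rintro q ⟨p, hp, rfl⟩
    · have hp' : ¬ XAv p.1 := by
        exact hp
      show (((![aP, bP] : Fin 2 → Equiv.Perm Vnz)⁻¹ 0) • p) ∈ Ypp 0
      simp only [Ypp, Matrix.cons_val_zero, Set.mem_setOf_eq]
      exact keyY hp'
    · have hp' : ¬ XAv (mM p.1) := by
        exact hp
      show (((![aP, bP] : Fin 2 → Equiv.Perm Vnz)⁻¹ 1) • p) ∈ Ypp 1
      simp only [Ypp, Matrix.cons_val_one, Matrix.head_cons, Set.mem_setOf_eq]
      have h2 : mM (((![aP, bP] : Fin 2 → Equiv.Perm Vnz)⁻¹ 1 • p : Vnz)).1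
          = aV⁻¹ (mM p.1) := by
        rw [show (((![aP, bP] : Fin 2 → Equiv.Perm Vnz)⁻¹ 1 • p : Vnz)).1 = bV⁻¹ p.1 from rfl,
          bV_inv_apply', mM_invol]
      show YAv (mM (((![aP, bP] : Fin 2 → Equiv.Perm Vnz)⁻¹ 1 • p : Vnz)).1)
      rw [h2]
      exact keyY hp'

end Stmt14Aux


namespace Stmt14Aux

section Enc

variable {B C : Type} [DecidableEq B] [DecidableEq C]

def bet (b0 b1 : B) (x : ZMod 2) : B := if x = 0 then b0 else b1

lemma bet_zero (b0 b1 : B) : bet b0 b1 0 = b0 := if_pos rfl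

lemma bet_one (b0 b1 : B) : bet b0 b1 1 = b1 := if_neg (by decide)

lemma zmod2_cases : ∀ x : ZMod 2, x = 0 ∨ x = 1 := by decide

lemma bet_add_one (b0 b1 : B) (x : ZMod 2) :
    bet b0 b1 (x + 1) = Equiv.swap b0 b1 (bet b0 b1 x) := by
  rcases zmod2_cases x with h | h <;> rw [h]
  · rw [zero_add, bet_one, bet_zero, Equiv.swap_apply_left]
  · rw [show (1 : ZMod 2) + 1 = 0 by decide, bet_zero, bet_one, Equiv.swap_apply_right]

lemma bet_injective {b0 b1 : B} (hb : b0 ≠ b1) {x y : ZMod 2}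
    (h : bet b0 b1 x = bet b0 b1 y) : x = y := by
  rcases zmod2_cases x with hx | hx <;> rcases zmod2_cases y with hy | hy <;>
    rw [hx, hy] at h ⊢ <;> first
      | rfl
      | (rw [bet_zero, bet_one] at h; exact absurd h hb)
      | (rw [bet_one, bet_zero] at h; exact absurd h.symm hb)

lemma bet_eq_one_iff {b0 b1 : B} (hb : b0 ≠ b1) (x : ZMod 2) :
    bet b0 b1 x = b1 ↔ x = 1 := by
  rcases zmod2_cases x with h | h <;> rw [h]
  · rw [bet_zero]; exact ⟨fun hh => absurd hh hb, fun hh => absurd hh (by decide)⟩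
  · rw [bet_one]; exact ⟨fun _ => rfl, fun _ => rfl⟩

/-- Conditional flip of the first track, controlled by the second. -/
def Pperm (b0 b1 : B) (c1 : C) : Equiv.Perm (B × C) :=
  Involutive.toPerm (fun q => if q.2 = c1 then (Equiv.swap b0 b1 q.1, q.2) else q)
    (by
      intro q
      dsimp only
      by_cases h : q.2 = c1
      · rw [if_pos h]
        rw [show ((Equiv.swap b0 b1 q.1, q.2) : B × C).2 = q.2 from rfl, if_pos h,
          Equiv.swap_apply_self]
      · rw [if_neg h, if_neg h])

/-- Conditional flip of the second track, controlled by the first. -/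
def Qperm (b1 : B) (c0 c1 : C) : Equiv.Perm (B × C) :=
  Involutive.toPerm (fun q => if q.1 = b1 then (q.1, Equiv.swap c0 c1 q.2) else q)
    (by
      intro q
      dsimp only
      by_cases h : q.1 = b1
      · rw [if_pos h]
        rw [show ((q.1, Equiv.swap c0 c1 q.2) : B × C).1 = q.1 from rfl, if_pos h,
          Equiv.swap_apply_self]
      · rw [if_neg h, if_neg h])

variable (b0 b1 : B) (c0 c1 : C)

/-- encoding of a model vector as a configuration -/
def enc (p : V2) : ℤ → B × C := fun i => (bet b0 b1 (p.1 i), bet c0 c1 (p.2 i))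

lemma enc_injective (hb : b0 ≠ b1) (hc : c0 ≠ c1) :
    Function.Injective (enc b0 b1 c0 c1) := by
  intro p q h
  have h1 : p.1 = q.1 := by
    apply r2_ext; intro i
    exact bet_injective hb (congrArg (fun f => (f i).1) h)
  have h2 : p.2 = q.2 := by
    apply r2_ext; intro i
    exact bet_injective hc (congrArg (fun f => (f i).2) h)
  exact Prod.ext h1 h2

lemma enc_P (hc : c0 ≠ c1) (p : V2) :
    symbolPerm (Pperm b0 b1 c1) (enc b0 b1 c0 c1 p)
      = enc b0 b1 c0 c1 (p.1 + p.2, p.2) := by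
  funext i
  show Pperm b0 b1 c1 (enc b0 b1 c0 c1 p i) = enc b0 b1 c0 c1 (p.1 + p.2, p.2) i
  have hco : (Pperm b0 b1 c1 : B × C → B × C)
      = fun q => if q.2 = c1 then (Equiv.swap b0 b1 q.1, q.2) else q :=
    Involutive.coe_toPerm _
  rw [hco]
  show (if bet c0 c1 (p.2 i) = c1 then
      (Equiv.swap b0 b1 (bet b0 b1 (p.1 i)), bet c0 c1 (p.2 i))
      else (bet b0 b1 (p.1 i), bet c0 c1 (p.2 i)))
    = (bet b0 b1 ((p.1 + p.2) i), bet c0 c1 (p.2 i))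
  rcases zmod2_cases (p.2 i) with h | h
  · rw [show (p.1 + p.2) i = p.1 i + p.2 i from r2_add_apply _ _ _, h, add_zero, bet_zero,
      if_neg hc]
  · rw [show (p.1 + p.2) i = p.1 i + p.2 i from r2_add_apply _ _ _, h, bet_one, if_pos rfl,
      bet_add_one]

lemma enc_Q (hb : b0 ≠ b1) (p : V2) :
    symbolPerm (Qperm b1 c0 c1) (enc b0 b1 c0 c1 p)
      = enc b0 b1 c0 c1 (p.1, p.2 + p.1) := by
  funext i
  show Qperm b1 c0 c1 (enc b0 b1 c0 c1 p i) = enc b0 b1 c0 c1 (p.1, p.2 + p.1) i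
  have hco : (Qperm b1 c0 c1 : B × C → B × C)
      = fun q => if q.1 = b1 then (q.1, Equiv.swap c0 c1 q.2) else q :=
    Involutive.coe_toPerm _
  rw [hco]
  show (if bet b0 b1 (p.1 i) = b1 then
      (bet b0 b1 (p.1 i), Equiv.swap c0 c1 (bet c0 c1 (p.2 i)))
      else (bet b0 b1 (p.1 i), bet c0 c1 (p.2 i)))
    = (bet b0 b1 (p.1 i), bet c0 c1 ((p.2 + p.1) i))
  rcases zmod2_cases (p.1 i) with h | h
  · rw [show (p.2 + p.1) i = p.2 i + p.1 i from r2_add_apply _ _ _, h, add_zero]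
    rw [if_neg (by rw [bet_zero]; exact hb)]
  · rw [show (p.2 + p.1) i = p.2 i + p.1 i from r2_add_apply _ _ _, h,
      if_pos (by rw [bet_one]), bet_add_one]

lemma enc_s1 (p : V2) :
    partialShift₁ B C (enc b0 b1 c0 c1 p) = enc b0 b1 c0 c1 (sh (-1) p.1, p.2) := by
  funext i
  show ((enc b0 b1 c0 c1 p (i + 1)).1, (enc b0 b1 c0 c1 p i).2)
    = (bet b0 b1 (sh (-1) p.1 i), bet c0 c1 (p.2 i))
  rw [sh_apply, sub_neg_eq_add]
  rfl

lemma enc_s1_inv (p : V2) :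
    (partialShift₁ B C)⁻¹ (enc b0 b1 c0 c1 p) = enc b0 b1 c0 c1 (sh 1 p.1, p.2) := by
  funext i
  show ((enc b0 b1 c0 c1 p (i - 1)).1, (enc b0 b1 c0 c1 p i).2)
    = (bet b0 b1 (sh 1 p.1 i), bet c0 c1 (p.2 i))
  rw [sh_apply]
  rfl

lemma enc_s2 (p : V2) :
    partialShift₂ B C (enc b0 b1 c0 c1 p) = enc b0 b1 c0 c1 (p.1, sh (-1) p.2) := by
  funext i
  show ((enc b0 b1 c0 c1 p i).1, (enc b0 b1 c0 c1 p (i + 1)).2)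
    = (bet b0 b1 (p.1 i), bet c0 c1 (sh (-1) p.2 i))
  rw [sh_apply, sub_neg_eq_add]
  rfl

lemma enc_s2_inv (p : V2) :
    (partialShift₂ B C)⁻¹ (enc b0 b1 c0 c1 p) = enc b0 b1 c0 c1 (p.1, sh 1 p.2) := by
  funext i
  show ((enc b0 b1 c0 c1 p i).1, (enc b0 b1 c0 c1 p (i - 1)).2)
    = (bet b0 b1 (p.1 i), bet c0 c1 (sh 1 p.2 i))
  rw [sh_apply]
  rfl

/-- CA realization of `aV`. -/
noncomputable def hatA : Equiv.Perm (ℤ → B × C) :=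
  symbolPerm (Pperm b0 b1 c1) *
    (partialShift₁ B C * partialShift₁ B C * symbolPerm (Qperm b1 c0 c1) *
      (partialShift₁ B C)⁻¹ * (partialShift₁ B C)⁻¹)

/-- CA realization of `mM`. -/
noncomputable def hatM : Equiv.Perm (ℤ → B × C) :=
  partialShift₂ B C * partialShift₂ B C * partialShift₂ B C * partialShift₂ B C *
    symbolPerm (Pperm b0 b1 c1) *
    (partialShift₂ B C)⁻¹ * (partialShift₂ B C)⁻¹ * (partialShift₂ B C)⁻¹ *
    (partialShift₂ B C)⁻¹

/-- CA realization of `bV`. -/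
noncomputable def hatB : Equiv.Perm (ℤ → B × C) :=
  hatM b0 b1 c1 * hatA b0 b1 c0 c1 * (hatM b0 b1 c1)⁻¹

lemma hatA_mem : hatA b0 b1 c0 c1 ∈ PAut B C := by
  have hs1 : partialShift₁ B C ∈ PAut B C :=
    Subgroup.subset_closure (Set.mem_union_left _ (Set.mem_insert _ _))
  have hP : symbolPerm (Pperm b0 b1 c1) ∈ PAut B C :=
    Subgroup.subset_closure (Set.mem_union_right _ ⟨Pperm b0 b1 c1, rfl⟩)
  have hQ : symbolPerm (Qperm b1 c0 c1) ∈ PAut B C :=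
    Subgroup.subset_closure (Set.mem_union_right _ ⟨Qperm b1 c0 c1, rfl⟩)
  exact mul_mem hP (mul_mem (mul_mem (mul_mem (mul_mem hs1 hs1) hQ) (inv_mem hs1))
    (inv_mem hs1))

lemma hatM_mem : hatM b0 b1 c1 ∈ PAut B C := by
  have hs2 : partialShift₂ B C ∈ PAut B C :=
    Subgroup.subset_closure (Set.mem_union_left _ (Set.mem_insert_of_mem _ rfl))
  have hP : symbolPerm (Pperm b0 b1 c1) ∈ PAut B C :=
    Subgroup.subset_closure (Set.mem_union_right _ ⟨Pperm b0 b1 c1, rfl⟩)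
  exact mul_mem (mul_mem (mul_mem (mul_mem (mul_mem (mul_mem (mul_mem (mul_mem hs2 hs2)
    hs2) hs2) hP) (inv_mem hs2)) (inv_mem hs2)) (inv_mem hs2)) (inv_mem hs2)

lemma hatB_mem : hatB b0 b1 c0 c1 ∈ PAut B C :=
  mul_mem (mul_mem (hatM_mem b0 b1 c1) (hatA_mem b0 b1 c0 c1))
    (inv_mem (hatM_mem b0 b1 c1))

lemma enc_hatA (hb : b0 ≠ b1) (hc : c0 ≠ c1) (p : V2) :
    hatA b0 b1 c0 c1 (enc b0 b1 c0 c1 p) = enc b0 b1 c0 c1 (aV p) := by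
  obtain ⟨u, v⟩ := p
  rw [hatA]
  simp only [Equiv.Perm.mul_apply]
  have e2 : sh 1 (sh 1 u) = sh 2 u := by
    rw [sh_sh]; norm_num
  have e1 : sh (-1) (sh (-1) (sh 1 (sh 1 u))) = u := by
    rw [e2, sh_sh, sh_sh]; norm_num [sh_zero]
  rw [enc_s1_inv, enc_s1_inv, enc_Q b0 b1 c0 c1 hb, enc_s1, enc_s1, e1, e2,
    enc_P b0 b1 c0 c1 hc]
  rfl

lemma enc_hatM (hc : c0 ≠ c1) (p : V2) :
    hatM b0 b1 c1 (enc b0 b1 c0 c1 p) = enc b0 b1 c0 c1 (mM p) := by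
  obtain ⟨u, v⟩ := p
  rw [hatM]
  simp only [Equiv.Perm.mul_apply]
  have e4 : sh 1 (sh 1 (sh 1 (sh 1 v))) = sh 4 v := by
    rw [sh_sh, sh_sh, sh_sh]; norm_num
  have e3 : sh (-1) (sh (-1) (sh (-1) (sh (-1) (sh 1 (sh 1 (sh 1 (sh 1 v))))))) = v := by
    rw [e4, sh_sh, sh_sh, sh_sh, sh_sh]; norm_num [sh_zero]
  rw [enc_s2_inv, enc_s2_inv, enc_s2_inv, enc_s2_inv, enc_P b0 b1 c0 c1 hc,
    enc_s2, enc_s2, enc_s2, enc_s2, e3, e4]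
  rfl

lemma enc_hatM_inv (hc : c0 ≠ c1) (p : V2) :
    (hatM b0 b1 c1)⁻¹ (enc b0 b1 c0 c1 p) = enc b0 b1 c0 c1 (mM p) := by
  have h1 : hatM b0 b1 c1 (enc b0 b1 c0 c1 (mM p)) = enc b0 b1 c0 c1 p := by
    rw [enc_hatM b0 b1 c0 c1 hc, mM_invol]
  calc (hatM b0 b1 c1)⁻¹ (enc b0 b1 c0 c1 p)
      = (hatM b0 b1 c1)⁻¹ (hatM b0 b1 c1 (enc b0 b1 c0 c1 (mM p))) := by rw [h1]
    _ = enc b0 b1 c0 c1 (mM p) := Equiv.Perm.inv_apply_self _ _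

lemma enc_hatB (hb : b0 ≠ b1) (hc : c0 ≠ c1) (p : V2) :
    hatB b0 b1 c0 c1 (enc b0 b1 c0 c1 p) = enc b0 b1 c0 c1 (bV p) := by
  rw [hatB]
  simp only [Equiv.Perm.mul_apply]
  rw [enc_hatM_inv b0 b1 c0 c1 hc, enc_hatA b0 b1 c0 c1 hb hc, enc_hatM b0 b1 c0 c1 hc]
  rfl

end Enc

end Stmt14Aux


/-- for `|B| ≥ 2` and `|C| ≥ 2`, the free group on two generators embeds into
`PAut[B;C]`. -/
theorem stmt14 (B C : Type) [Fintype B] [Fintype C]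
    (hB : 2 ≤ Fintype.card B) (hC : 2 ≤ Fintype.card C) :
    ∃ φ : FreeGroup (Fin 2) →* PAut B C, Function.Injective φ := by
  classical
  open Stmt14Aux in
  obtain ⟨b0, b1, hb⟩ := Fintype.exists_pair_of_one_lt_card (by omega : 1 < Fintype.card B)
  obtain ⟨c0, c1, hc⟩ := Fintype.exists_pair_of_one_lt_card (by omega : 1 < Fintype.card C)
  -- the two generators of the image
  set gA : PAut B C := ⟨hatA b0 b1 c0 c1, hatA_mem b0 b1 c0 c1⟩ with hgA
  set gB : PAut B C := ⟨hatB b0 b1 c0 c1, hatB_mem b0 b1 c0 c1⟩ with hgB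
  set φ : FreeGroup (Fin 2) →* PAut B C := FreeGroup.lift ![gA, gB] with hφ
  set ψ : FreeGroup (Fin 2) →* Equiv.Perm Vnz := FreeGroup.lift ![aP, bP] with hψ
  refine ⟨φ, (injective_iff_map_eq_one φ).mpr ?_⟩
  intro w hw
  -- semiconjugacy
  have key : ∀ w : FreeGroup (Fin 2), ∀ p : Vnz,
      ((φ w : PAut B C) : Equiv.Perm (ℤ → B × C)) (enc b0 b1 c0 c1 p.1)
        = enc b0 b1 c0 c1 ((ψ w p).1) := by
    intro w
    induction w using FreeGroup.induction_on with
    | C1 =>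
      intro p
      rw [map_one, map_one]
      rfl
    | of i =>
      intro p
      change ((φ (pure i) : PAut B C) : Equiv.Perm (ℤ → B × C)) (enc b0 b1 c0 c1 p.1)
        = enc b0 b1 c0 c1 ((ψ (pure i) p).1)
      have h1 : φ (pure i) = ![gA, gB] i := by
        rw [show (pure i : FreeGroup (Fin 2)) = FreeGroup.of i from rfl, hφ,
          FreeGroup.lift_apply_of]
      have h2 : ψ (pure i) = ![aP, bP] i := by
        rw [show (pure i : FreeGroup (Fin 2)) = FreeGroup.of i from rfl, hψ,
          FreeGroup.lift_apply_of]
      rw [h1, h2]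
      fin_cases i
      · simp only [Matrix.cons_val_zero]
        rw [hgA]
        exact enc_hatA b0 b1 c0 c1 hb hc p.1
      · simp only [Matrix.cons_val_one, Matrix.head_cons]
        rw [hgB]
        exact enc_hatB b0 b1 c0 c1 hb hc p.1
    | inv_of i ih =>
      intro p
      rw [map_inv, map_inv]
      change (((φ (pure i))⁻¹ : PAut B C) : Equiv.Perm (ℤ → B × C)) (enc b0 b1 c0 c1 p.1)
        = enc b0 b1 c0 c1 (((ψ (pure i))⁻¹ p).1)
      replace ih : ∀ p : Vnz, ((φ (pure i) : PAut B C) : Equiv.Perm (ℤ → B × C))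
          (enc b0 b1 c0 c1 p.1) = enc b0 b1 c0 c1 ((ψ (pure i) p).1) := ih
      have hsub : (((φ (pure i))⁻¹ : PAut B C) : Equiv.Perm (ℤ → B × C))
          = (((φ (pure i)) : PAut B C) : Equiv.Perm (ℤ → B × C))⁻¹ := rfl
      rw [hsub]
      apply (((φ (pure i)) : PAut B C) : Equiv.Perm (ℤ → B × C)).injective
      rw [Equiv.Perm.apply_inv_self]
      rw [ih ((ψ (pure i))⁻¹ p), Equiv.Perm.apply_inv_self]
    | mul x y ihx ihy =>
      intro p
      rw [map_mul, map_mul]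
      have hsub : ((φ x * φ y : PAut B C) : Equiv.Perm (ℤ → B × C))
          = ((φ x : PAut B C) : Equiv.Perm (ℤ → B × C))
            * ((φ y : PAut B C) : Equiv.Perm (ℤ → B × C)) := rfl
      rw [hsub, Equiv.Perm.mul_apply, ihy p, ihx (ψ y p), Equiv.Perm.mul_apply]
  -- conclude
  have hψw : ψ w = 1 := by
    apply Equiv.ext
    intro p
    have h1 := key w p
    rw [hw] at h1
    have h2 : enc b0 b1 c0 c1 p.1 = enc b0 b1 c0 c1 ((ψ w p).1) := by
      rw [← h1]; rfl
    have h3 : (ψ w p).1 = p.1 := (enc_injective b0 b1 c0 c1 hb hc h2).symm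
    exact Subtype.ext h3
  have : w = 1 := by
    apply model_injective
    rw [map_one]
    exact hψw
  exact this
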